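/- In an abelian category equipped with a monoidal structure whose tensor product is right exact in each variable, if p : B → I is an epimorphism onto the monoidal unit I, then the canonical map (p ⊗ id, id ⊗ p) : B ⊗ B → B ×_I B into the pullback of p along itself is an epimorphism. -/

import Mathlib

/-!
As `p` is epi, so is `pullback.fst p p`, and its kernel is `kernel p` embedded as
`(0, kernel.ι p)`. Let `u` be a map out of `B ×_I B` with `h ≫ u = 0`. Precomposing the
embedding of `kernel p` with the epimorphism `kernel p ⊗ B ⟶ kernel p ⊗ I ≅ kernel p` gives
`(kernel.ι p ▷ B) ≫ h`, so `u` vanishes on `kernel p` and factors as `pullback.fst ≫ d`.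
Then `d = 0`, because `h ≫ pullback.fst = (p ▷ B) ≫ λ` is epi by right exactness.
-/

open CategoryTheory CategoryTheory.Limits CategoryTheory.MonoidalCategory

theorem CategoryTheory.Abelian.exists_pullback_fst_comp_eq {C : Type*} [Category C] [Abelian C]
    {A B X Z : C} (f : A ⟶ X) (p : B ⟶ X) [Epi p]
    (u : pullback f p ⟶ Z) (hu : pullback.lift 0 (kernel.ι p) (by simp) ≫ u = 0) :
    ∃ d : A ⟶ Z, pullback.fst f p ≫ d = u := by
  have hk : (kernel.ι (pullback.fst f p) ≫ pullback.snd f p) ≫ p = 0 := by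
    rw [Category.assoc, ← pullback.condition, kernel.condition_assoc, zero_comp]
  have hfactor : kernel.lift p _ hk ≫ pullback.lift 0 (kernel.ι p) (by simp) =
      kernel.ι (pullback.fst f p) := by
    apply pullback.hom_ext <;> simp [pullback.lift_fst, pullback.lift_snd]
  refine ⟨Abelian.epiDesc _ u ?_, Abelian.comp_epiDesc _ _ _⟩
  rw [← hfactor, Category.assoc, hu, comp_zero]

theorem kernel_ι_whiskerRight_comp_eq {C : Type*} [Category C] [MonoidalCategory C]
    [HasZeroMorphisms C] {B : C} [(tensorRight B).PreservesZeroMorphisms]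
    (p : B ⟶ 𝟙_ C) [HasKernel p] [HasPullback p p] (h : B ⊗ B ⟶ pullback p p)
    (h₁ : h ≫ pullback.fst p p = (p ▷ B) ≫ (λ_ B).hom)
    (h₂ : h ≫ pullback.snd p p = (B ◁ p) ≫ (ρ_ B).hom) :
    (kernel.ι p ▷ B) ≫ h =
      ((kernel p ◁ p) ≫ (ρ_ (kernel p)).hom) ≫ pullback.lift 0 (kernel.ι p) (by simp) := by
  apply pullback.hom_ext
  · have hzero : (0 : kernel p ⟶ 𝟙_ C) ▷ B = 0 := (tensorRight B).map_zero _ _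
    simp [h₁, ← comp_whiskerRight_assoc, hzero, pullback.lift_fst]
  · simp [h₂, ← whisker_exchange_assoc, pullback.lift_snd]

theorem epi_tensor_to_pullback
    {C : Type u} [Category.{v} C] [Abelian C] [MonoidalCategory C]
    -- tensoring is right exact in each variable
    [∀ X : C, PreservesFiniteColimits (tensorLeft X)]
    [∀ X : C, PreservesFiniteColimits (tensorRight X)]
    {B : C} (p : B ⟶ 𝟙_ C) [Epi p]
    -- `h` is the canonical map `B ⊗ B → B ×_I B` induced by
    -- `p ⊗ id : B ⊗ B → I ⊗ B ≅ B` and `id ⊗ p : B ⊗ B → B ⊗ I ≅ B`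
    (h : (B ⊗ B : C) ⟶ pullback p p)
    (h₁ : h ≫ pullback.fst p p = (p ▷ B) ≫ (λ_ B).hom)
    (h₂ : h ≫ pullback.snd p p = (B ◁ p) ≫ (ρ_ B).hom) :
    Epi h := by
  refine Preadditive.epi_of_cancel_zero _ fun u hu => ?_
  have : Epi (kernel p ◁ p) := (tensorLeft (kernel p)).map_epi p
  have : Epi (p ▷ B) := (tensorRight B).map_epi p
  obtain ⟨d, rfl⟩ := Abelian.exists_pullback_fst_comp_eq p p u <| by
    rw [← cancel_epi ((kernel p ◁ p) ≫ (ρ_ (kernel p)).hom), ← Category.assoc,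
      ← kernel_ι_whiskerRight_comp_eq p h h₁ h₂, Category.assoc, hu, comp_zero, comp_zero]
  have hd : d = 0 := by
    rw [← cancel_epi ((p ▷ B) ≫ (λ_ B).hom), ← h₁, Category.assoc, hu, comp_zero]
  rw [hd, comp_zero]
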